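/- For operators ρ', ρ, X on a finite-dimensional Hilbert space H with ρ', ρ positive semidefinite, the block operator [[ρ', X],[X†, ρ]] is positive semidefinite if and only if there exists an operator Y with operator norm ‖Y‖ ≤ 1 such that X = √ρ' · Y · √ρ. -/

import Mathlib

open Matrix ComplexOrder

variable {n : Type*} [Fintype n] [DecidableEq n]

/-- The old Mathlib `Matrix.PosSemidef.sqrt` (removed upstream), with its old definition. -/
noncomputable def Matrix.PosSemidef.sqrt {A : Matrix n n ℂ} (hA : A.PosSemidef) : Matrix n n ℂ :=
  hA.isHermitian.eigenvectorUnitary.1 * diagonal ((↑) ∘ (Real.sqrt ∘ hA.isHermitian.eigenvalues)) *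
  (star hA.isHermitian.eigenvectorUnitary : Matrix n n ℂ)

/-- The trace norm `‖M‖₁ = Tr √(Mᴴ M)` of a matrix. -/
noncomputable def traceNorm (M : Matrix n n ℂ) : ℝ :=
  ((Matrix.posSemidef_conjTranspose_mul_self M).sqrt.trace).re

/-- Positive semidefinite square root (junk value `0` off the PSD matrices). -/
noncomputable def msqrt (A : Matrix n n ℂ) : Matrix n n ℂ :=
  @dite _ A.PosSemidef (Classical.propDecidable _) (fun h => h.sqrt) (fun _ => 0)

/-- Fidelity `F(ρ,σ) = ‖√ρ √σ‖₁²`. -/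
noncomputable def fidelity (ρ σ : Matrix n n ℂ) : ℝ :=
  (traceNorm (msqrt ρ * msqrt σ)) ^ 2

/-- A density operator: positive semidefinite with unit trace. -/
def IsDensity (ρ : Matrix n n ℂ) : Prop := ρ.PosSemidef ∧ ρ.trace = 1

/-- The Löwner partial order `A ⪯ B`. -/
def Loewner (A B : Matrix n n ℂ) : Prop := (B - A).PosSemidef

/-- `supp ρ ⊆ supp σ`, expressed for PSD matrices as `ker σ ⊆ ker ρ`. -/
def SuppSubset (ρ σ : Matrix n n ℂ) : Prop := ∀ v, σ *ᵥ v = 0 → ρ *ᵥ v = 0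

/-- Observational divergence `D(ρ‖σ)`. -/
noncomputable def obsDiv (ρ σ : Matrix n n ℂ) : ℝ :=
  sSup { x | ∃ M : Matrix n n ℂ, M.PosSemidef ∧ (1 - M).PosSemidef ∧
    (M * σ).trace ≠ 0 ∧
    x = ((M * ρ).trace).re * Real.logb 2 (((M * ρ).trace).re / ((M * σ).trace).re) }

/-- The operator (spectral) norm of a matrix, acting on Euclidean space. -/
noncomputable def opNorm (Y : Matrix n n ℂ) : ℝ :=
  ‖(Matrix.toEuclideanCLM (𝕜 := ℂ) (n := n) Y : EuclideanSpace ℂ n →L[ℂ] EuclideanSpace ℂ n)‖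

set_option linter.unusedSectionVars false

namespace Stmt12Aux

variable {n : Type*} [Fintype n] [DecidableEq n]

noncomputable def sqn (w : n → ℂ) : ℝ := (star w ⬝ᵥ w).re

lemma dot_self_normSq (w : n → ℂ) : star w ⬝ᵥ w = ((∑ i, Complex.normSq (w i) : ℝ) : ℂ) := by
  simp [dotProduct, Complex.normSq_eq_conj_mul_self]

lemma sqn_sum (w : n → ℂ) : sqn w = ∑ i, Complex.normSq (w i) := by
  rw [sqn, dot_self_normSq]; simp

lemma dot_self_eq (w : n → ℂ) : star w ⬝ᵥ w = ((sqn w : ℝ) : ℂ) := by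
  rw [dot_self_normSq, sqn_sum]

lemma sqn_nonneg (w : n → ℂ) : 0 ≤ sqn w := by
  rw [sqn_sum]; exact Finset.sum_nonneg fun i _ => Complex.normSq_nonneg _

lemma sqn_eq_zero {w : n → ℂ} (h : sqn w = 0) : w = 0 := by
  rw [sqn_sum] at h
  funext i
  have hi := (Finset.sum_eq_zero_iff_of_nonneg
    (fun i _ => Complex.normSq_nonneg (w i))).mp h i (Finset.mem_univ i)
  simpa [Complex.normSq_eq_zero] using hi

lemma shift (M : Matrix n n ℂ) (u w : n → ℂ) :
    star (Mᴴ *ᵥ u) ⬝ᵥ w = star u ⬝ᵥ (M *ᵥ w) := by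
  rw [star_mulVec, conjTranspose_conjTranspose, ← dotProduct_mulVec]

lemma conj_cross (X : Matrix n n ℂ) (u v : n → ℂ) :
    star v ⬝ᵥ (Xᴴ *ᵥ u) = (starRingEnd ℂ) (star u ⬝ᵥ (X *ᵥ v)) := by
  have h1 : star u ⬝ᵥ (X *ᵥ v) = star (Xᴴ *ᵥ u) ⬝ᵥ v := (shift X u v).symm
  rw [h1, star_dotProduct]
  simp

-- Cauchy-Schwarz via EuclideanSpace
lemma cs_dot (u v : n → ℂ) :
    Complex.normSq (star u ⬝ᵥ v) ≤ sqn u * sqn v := by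
  have h := norm_inner_le_norm (𝕜 := ℂ)
    ((WithLp.equiv 2 (n → ℂ)).symm u) ((WithLp.equiv 2 (n → ℂ)).symm v)
  rw [EuclideanSpace.inner_eq_star_dotProduct] at h
  simp only [WithLp.equiv_symm_apply, WithLp.ofLp_toLp] at h
  rw [dotProduct_comm] at h
  have hu : ‖(WithLp.equiv 2 (n → ℂ)).symm u‖ ^ 2 = sqn u := by
    rw [← inner_self_eq_norm_sq (𝕜 := ℂ), EuclideanSpace.inner_eq_star_dotProduct,
      sqn, dotProduct_comm]
    rfl
  have hv : ‖(WithLp.equiv 2 (n → ℂ)).symm v‖ ^ 2 = sqn v := by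
    rw [← inner_self_eq_norm_sq (𝕜 := ℂ), EuclideanSpace.inner_eq_star_dotProduct,
      sqn, dotProduct_comm]
    rfl
  have h2 : Complex.normSq (star u ⬝ᵥ v) = ‖star u ⬝ᵥ v‖ ^ 2 := by
    rw [← Complex.sq_norm]
  rw [h2, ← hu, ← hv]
  calc ‖star u ⬝ᵥ v‖ ^ 2 ≤ (‖(WithLp.equiv 2 (n → ℂ)).symm u‖ * ‖(WithLp.equiv 2 (n → ℂ)).symm v‖) ^ 2 := by
        apply pow_le_pow_left₀ (norm_nonneg _) h
    _ = _ := by ring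

variable {ρ' ρ X : Matrix n n ℂ}

lemma quad_re (h : (Matrix.fromBlocks ρ' X Xᴴ ρ).PosSemidef) (u v : n → ℂ) :
    0 ≤ (star u ⬝ᵥ (ρ' *ᵥ u)).re + 2 * (star u ⬝ᵥ (X *ᵥ v)).re + (star v ⬝ᵥ (ρ *ᵥ v)).re := by
  have h2 := h.dotProduct_mulVec_nonneg (Sum.elim u v)
  rw [Function.star_sumElim, fromBlocks_mulVec, dotProduct_block] at h2
  simp only [Sum.elim_comp_inl, Sum.elim_comp_inr, dotProduct_add] at h2
  rw [conj_cross X u v] at h2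
  rw [Complex.le_def] at h2
  have h3 := h2.1
  simp only [Complex.zero_re, Complex.add_re, Complex.conj_re] at h3
  linarith




lemma cs_block (h : (Matrix.fromBlocks ρ' X Xᴴ ρ).PosSemidef) (u v : n → ℂ) :
    Complex.normSq (star u ⬝ᵥ (X *ᵥ v)) ≤
      (star u ⬝ᵥ (ρ' *ᵥ u)).re * (star v ⬝ᵥ (ρ *ᵥ v)).re := by
  set a := (star u ⬝ᵥ (ρ' *ᵥ u)).re with ha_def
  set b := (star v ⬝ᵥ (ρ *ᵥ v)).re with hb_def
  set c := star u ⬝ᵥ (X *ᵥ v) with hc_def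
  set d := Complex.normSq c with hd_def
  have ha : 0 ≤ a := by
    have := quad_re h u 0
    simpa using this
  have hb : 0 ≤ b := by
    have := quad_re h 0 v
    simpa using this
  have hd : 0 ≤ d := Complex.normSq_nonneg c
  have key : ∀ s : ℝ, 0 ≤ s ^ 2 * d * a - 2 * (s * d) + b := by
    intro s
    have hq := quad_re h ((-(s : ℂ) * c) • u) v
    have e1 : star ((-(s : ℂ) * c) • u) ⬝ᵥ (ρ' *ᵥ ((-(s : ℂ) * c) • u))
        = ((s ^ 2 * d : ℝ) : ℂ) * (star u ⬝ᵥ (ρ' *ᵥ u)) := by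
      rw [mulVec_smul, star_smul, smul_dotProduct, dotProduct_smul, smul_eq_mul, smul_eq_mul,
        ← mul_assoc]
      congr 1
      simp only [star_mul', star_neg, Complex.star_def, Complex.conj_ofReal]
      push_cast
      rw [hd_def, Complex.normSq_eq_conj_mul_self]
      ring
    have e2 : star ((-(s : ℂ) * c) • u) ⬝ᵥ (X *ᵥ v) = ((-(s * d) : ℝ) : ℂ) := by
      rw [star_smul, smul_dotProduct, smul_eq_mul, ← hc_def]
      simp only [star_mul', star_neg, Complex.star_def, Complex.conj_ofReal]
      push_cast
      rw [hd_def, Complex.normSq_eq_conj_mul_self]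
      ring
    rw [e1, e2] at hq
    simp only [Complex.re_ofReal_mul, Complex.ofReal_re] at hq
    linarith
  rcases eq_or_lt_of_le hd with hd0 | hd0
  · rw [← hd0]; exact mul_nonneg ha hb
  rcases eq_or_lt_of_le ha with ha0 | ha0
  · exfalso
    have hk := key ((b + 1) / (2 * d))
    rw [← ha0] at hk
    have h2 : 2 * ((b + 1) / (2 * d) * d) = b + 1 := by field_simp
    nlinarith [hk]
  · have hk := key (1 / a)
    have e : (1 / a) ^ 2 * d * a - 2 * (1 / a * d) + b = b - d / a := by
      field_simp
      ring
    rw [e] at hk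
    have h3 : d / a ≤ b := by linarith
    calc d = d / a * a := by field_simp
      _ ≤ b * a := mul_le_mul_of_nonneg_right h3 ha0.le
      _ = a * b := mul_comm _ _
lemma k_left (h : (Matrix.fromBlocks ρ' X Xᴴ ρ).PosSemidef) {u : n → ℂ}
    (hu : ρ' *ᵥ u = 0) : Xᴴ *ᵥ u = 0 := by
  have h0 : ∀ v, star u ⬝ᵥ (X *ᵥ v) = 0 := by
    intro v
    have hcs := cs_block h u v
    rw [hu] at hcs
    simp only [dotProduct_zero, Complex.zero_re, zero_mul] at hcs
    have := Complex.normSq_nonneg (star u ⬝ᵥ (X *ᵥ v))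
    exact Complex.normSq_eq_zero.mp (le_antisymm hcs this)
  apply sqn_eq_zero
  have h1 := h0 (Xᴴ *ᵥ u)
  rw [← shift X u (Xᴴ *ᵥ u)] at h1
  rw [sqn, h1, Complex.zero_re]

lemma k_right (h : (Matrix.fromBlocks ρ' X Xᴴ ρ).PosSemidef) {v : n → ℂ}
    (hv : ρ *ᵥ v = 0) : X *ᵥ v = 0 := by
  have h0 : ∀ u, star u ⬝ᵥ (X *ᵥ v) = 0 := by
    intro u
    have hcs := cs_block h u v
    rw [hv] at hcs
    simp only [dotProduct_zero, Complex.zero_re, mul_zero] at hcs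
    have := Complex.normSq_nonneg (star u ⬝ᵥ (X *ᵥ v))
    exact Complex.normSq_eq_zero.mp (le_antisymm hcs this)
  apply sqn_eq_zero
  rw [sqn, h0 (X *ᵥ v), Complex.zero_re]

lemma eq_zero_of_mulVec {M : Matrix n n ℂ} (h : ∀ v, M *ᵥ v = 0) : M = 0 := by
  ext i j
  have := congrFun (h (Pi.single j 1)) i
  simpa [mulVec_single] using this

lemma sqn_eq_norm (w : n → ℂ) : sqn w = ‖(WithLp.equiv 2 (n → ℂ)).symm w‖ ^ 2 := by
  rw [← inner_self_eq_norm_sq (𝕜 := ℂ), EuclideanSpace.inner_eq_star_dotProduct,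
    sqn, dotProduct_comm]
  rfl

lemma opNorm_le_one_iff (Y : Matrix n n ℂ) :
    opNorm Y ≤ 1 ↔ ∀ v : n → ℂ, sqn (Y *ᵥ v) ≤ sqn v := by
  constructor
  · intro hY v
    have h1 := (Matrix.toEuclideanCLM (𝕜 := ℂ) (n := n) Y).le_opNorm
      ((WithLp.equiv 2 (n → ℂ)).symm v)
    rw [WithLp.equiv_symm_apply, Matrix.toEuclideanCLM_toLp] at h1
    have h2 : ‖(WithLp.equiv 2 (n → ℂ)).symm (Y *ᵥ v)‖ ≤ ‖(WithLp.equiv 2 (n → ℂ)).symm v‖ := by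
      calc ‖(WithLp.equiv 2 (n → ℂ)).symm (Y *ᵥ v)‖
          ≤ opNorm Y * ‖(WithLp.equiv 2 (n → ℂ)).symm v‖ := h1
        _ ≤ 1 * ‖(WithLp.equiv 2 (n → ℂ)).symm v‖ :=
            mul_le_mul_of_nonneg_right hY (norm_nonneg _)
        _ = _ := one_mul _
    rw [sqn_eq_norm, sqn_eq_norm]
    exact pow_le_pow_left₀ (norm_nonneg _) h2 2
  · intro hY
    apply ContinuousLinearMap.opNorm_le_bound _ zero_le_one
    intro x
    have hx : x = (WithLp.equiv 2 (n → ℂ)).symm (WithLp.equiv 2 (n → ℂ) x) :=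
      (Equiv.symm_apply_apply _ _).symm
    rw [hx, WithLp.equiv_symm_apply, Matrix.toEuclideanCLM_toLp, one_mul]
    have h1 := hY (WithLp.equiv 2 (n → ℂ) x)
    rw [sqn_eq_norm, sqn_eq_norm] at h1
    have h2 := Real.sqrt_le_sqrt h1
    rwa [Real.sqrt_sq (norm_nonneg _), Real.sqrt_sq (norm_nonneg _)] at h2

lemma proj_le {E : Matrix n n ℂ} (hherm : Eᴴ = E) (hidem : E * E = E) (u : n → ℂ) :
    (star u ⬝ᵥ (E *ᵥ u)).re ≤ sqn u := by
  have h1 : sqn ((1 - E) *ᵥ u) = sqn u - (star u ⬝ᵥ (E *ᵥ u)).re := by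
    have e1 : star ((1 - E) *ᵥ u) ⬝ᵥ ((1 - E) *ᵥ u)
        = star u ⬝ᵥ (((1 - E) * (1 - E)) *ᵥ u) := by
      rw [← mulVec_mulVec]
      rw [← shift (1 - E) u ((1 - E) *ᵥ u)]
      congr 1
      rw [conjTranspose_sub, conjTranspose_one, hherm]
    have e2 : (1 - E) * (1 - E) = 1 - E := by
      rw [sub_mul, mul_sub, mul_sub, one_mul, mul_one, hidem]
      noncomm_ring
    rw [sqn, e1, e2, sub_mulVec, one_mulVec, dotProduct_sub, Complex.sub_re, sqn]
  have := sqn_nonneg ((1 - E) *ᵥ u)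
  linarith

section Spectral

variable {A : Matrix n n ℂ}

/-- Conjugation of a real diagonal function of the eigenvalues by the eigenvector unitary. -/
noncomputable def cdiag (hA : A.IsHermitian) (f : ℝ → ℝ) : Matrix n n ℂ :=
  hA.eigenvectorUnitary.1 * Matrix.diagonal ((↑) ∘ f ∘ hA.eigenvalues) *
    (star hA.eigenvectorUnitary : Matrix n n ℂ)

lemma cdiag_mul (hA : A.IsHermitian) (f g : ℝ → ℝ) :
    cdiag hA f * cdiag hA g = cdiag hA fun x => f x * g x := by
  have hU : (star hA.eigenvectorUnitary : Matrix n n ℂ) * hA.eigenvectorUnitary.1 = 1 :=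
    UnitaryGroup.star_mul_self _
  rw [cdiag, cdiag, cdiag]
  rw [show hA.eigenvectorUnitary.1 * Matrix.diagonal ((↑) ∘ f ∘ hA.eigenvalues) *
      (star hA.eigenvectorUnitary : Matrix n n ℂ) *
      (hA.eigenvectorUnitary.1 * Matrix.diagonal ((↑) ∘ g ∘ hA.eigenvalues) *
      (star hA.eigenvectorUnitary : Matrix n n ℂ))
      = hA.eigenvectorUnitary.1 * (Matrix.diagonal ((↑) ∘ f ∘ hA.eigenvalues) *
      ((star hA.eigenvectorUnitary : Matrix n n ℂ) * hA.eigenvectorUnitary.1) *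
      Matrix.diagonal ((↑) ∘ g ∘ hA.eigenvalues)) *
      (star hA.eigenvectorUnitary : Matrix n n ℂ) by simp only [Matrix.mul_assoc]]
  rw [hU, Matrix.mul_one, Matrix.diagonal_mul_diagonal]
  have hfg : (Complex.ofReal ∘ (fun x => f x * g x) ∘ hA.eigenvalues)
      = fun i => ((f (hA.eigenvalues i) : ℂ) * (g (hA.eigenvalues i) : ℂ)) := by
    funext i
    simp
  rw [hfg]
  rfl

lemma cdiag_herm (hA : A.IsHermitian) (f : ℝ → ℝ) : (cdiag hA f)ᴴ = cdiag hA f := by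
  rw [cdiag, conjTranspose_mul, conjTranspose_mul, diagonal_conjTranspose]
  rw [show (star hA.eigenvectorUnitary : Matrix n n ℂ)ᴴ = hA.eigenvectorUnitary.1 by
    rw [← star_eq_conjTranspose, star_star]]
  rw [show (hA.eigenvectorUnitary.1 : Matrix n n ℂ)ᴴ = (star hA.eigenvectorUnitary : Matrix n n ℂ) by
    rw [← star_eq_conjTranspose]]
  have hv : star ((↑) ∘ f ∘ hA.eigenvalues : n → ℂ) = ((↑) ∘ f ∘ hA.eigenvalues : n → ℂ) := by
    funext i
    simp [Function.comp, Complex.conj_ofReal]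
  rw [hv, Matrix.mul_assoc]

lemma sqrt_eq_cdiag (hA : A.PosSemidef) : hA.sqrt = cdiag hA.1 Real.sqrt := rfl

theorem _root_.Matrix.PosSemidef.sqrt_mul_self (hA : A.PosSemidef) : hA.sqrt * hA.sqrt = A := by
  rw [sqrt_eq_cdiag, cdiag_mul, cdiag]
  have hd : (Complex.ofReal ∘ (fun x => Real.sqrt x * Real.sqrt x) ∘ hA.1.eigenvalues)
      = RCLike.ofReal ∘ hA.1.eigenvalues := by
    funext i
    simp [Real.mul_self_sqrt (hA.eigenvalues_nonneg i)]
  rw [hd]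
  conv_rhs => rw [hA.1.spectral_theorem]
  rfl

end Spectral

section Main

variable (hρ' : ρ'.PosSemidef) (hρ : ρ.PosSemidef)

lemma sqrt_mul_fun_eq (hA : (A : Matrix n n ℂ).PosSemidef) :
    cdiag hA.1 Real.sqrt * cdiag hA.1 (fun x => (Real.sqrt x)⁻¹)
      = cdiag hA.1 (fun x => Real.sqrt x * (Real.sqrt x)⁻¹) :=
  cdiag_mul _ _ _

lemma fun_mul_sqrt_eq (hA : (A : Matrix n n ℂ).PosSemidef) :
    cdiag hA.1 (fun x => (Real.sqrt x)⁻¹) * cdiag hA.1 Real.sqrt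
      = cdiag hA.1 (fun x => Real.sqrt x * (Real.sqrt x)⁻¹) := by
  rw [cdiag_mul]
  exact congrArg (cdiag hA.1) (funext fun x => mul_comm _ _)

lemma proj_mul_sqrt (hA : (A : Matrix n n ℂ).PosSemidef) :
    cdiag hA.1 Real.sqrt * cdiag hA.1 (fun x => Real.sqrt x * (Real.sqrt x)⁻¹)
      = cdiag hA.1 Real.sqrt := by
  rw [cdiag_mul]
  refine congrArg (cdiag hA.1) (funext fun x => ?_)
  rcases eq_or_ne (Real.sqrt x) 0 with hx | hx
  · simp [hx]
  · field_simp

lemma proj_idem (hA : (A : Matrix n n ℂ).PosSemidef) :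
    cdiag hA.1 (fun x => Real.sqrt x * (Real.sqrt x)⁻¹)
      * cdiag hA.1 (fun x => Real.sqrt x * (Real.sqrt x)⁻¹)
      = cdiag hA.1 (fun x => Real.sqrt x * (Real.sqrt x)⁻¹) := by
  rw [cdiag_mul]
  refine congrArg (cdiag hA.1) (funext fun x => ?_)
  rcases eq_or_ne (Real.sqrt x) 0 with hx | hx
  · simp [hx]
  · field_simp

lemma base_mul_ginv (hA : (A : Matrix n n ℂ).PosSemidef) :
    A * cdiag hA.1 (fun x => (Real.sqrt x)⁻¹) = cdiag hA.1 Real.sqrt := by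
  have h1 : A = cdiag hA.1 Real.sqrt * cdiag hA.1 Real.sqrt := by
    rw [← sqrt_eq_cdiag hA, hA.sqrt_mul_self]
  nth_rewrite 1 [h1]
  rw [Matrix.mul_assoc, sqrt_mul_fun_eq, proj_mul_sqrt]
  all_goals exact hA

lemma ginv_mul_base_mul_ginv (hA : (A : Matrix n n ℂ).PosSemidef) :
    cdiag hA.1 (fun x => (Real.sqrt x)⁻¹) * A * cdiag hA.1 (fun x => (Real.sqrt x)⁻¹)
      = cdiag hA.1 (fun x => Real.sqrt x * (Real.sqrt x)⁻¹) := by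
  rw [Matrix.mul_assoc, base_mul_ginv, fun_mul_sqrt_eq]
  all_goals exact hA

end Main

lemma base_absorb (hA : (A : Matrix n n ℂ).PosSemidef) :
    A * cdiag hA.1 (fun x => Real.sqrt x * (Real.sqrt x)⁻¹) = A := by
  have h2 : hA.sqrt * (hA.sqrt * cdiag hA.1 (fun x => Real.sqrt x * (Real.sqrt x)⁻¹)) = A := by
    rw [sqrt_eq_cdiag, proj_mul_sqrt hA, ← sqrt_eq_cdiag hA, hA.sqrt_mul_self]
  have h3 : hA.sqrt * (hA.sqrt * cdiag hA.1 (fun x => Real.sqrt x * (Real.sqrt x)⁻¹))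
      = A * cdiag hA.1 (fun x => Real.sqrt x * (Real.sqrt x)⁻¹) := by
    rw [← Matrix.mul_assoc, hA.sqrt_mul_self]
  rw [← h3, h2]

lemma proj_absorb_left {E : Matrix n n ℂ} (h : (Matrix.fromBlocks ρ' X Xᴴ ρ).PosSemidef)
    (hherm : Eᴴ = E) (hker : ρ' * E = ρ') : E * X = X := by
  have h1 : Xᴴ * (1 - E) = 0 := by
    apply eq_zero_of_mulVec
    intro w
    rw [← mulVec_mulVec]
    apply k_left h
    rw [mulVec_mulVec, mul_sub, mul_one, hker, sub_self, zero_mulVec]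
  have h2 := congrArg conjTranspose h1
  rw [conjTranspose_mul, conjTranspose_conjTranspose, conjTranspose_sub, conjTranspose_one,
    hherm, conjTranspose_zero, sub_mul, one_mul] at h2
  have h3 : X - E * X = 0 := h2
  linear_combination (norm := noncomm_ring) -h3

lemma proj_absorb_right {E : Matrix n n ℂ} (h : (Matrix.fromBlocks ρ' X Xᴴ ρ).PosSemidef)
    (hker : ρ * E = ρ) : X * E = X := by
  have h1 : X * (1 - E) = 0 := by
    apply eq_zero_of_mulVec
    intro w
    rw [← mulVec_mulVec]
    apply k_right h
    rw [mulVec_mulVec, mul_sub, mul_one, hker, sub_self, zero_mulVec]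
  rw [mul_sub, mul_one] at h1
  linear_combination (norm := noncomm_ring) -h1

lemma forward (hρ' : ρ'.PosSemidef) (hρ : ρ.PosSemidef)
    (h : (Matrix.fromBlocks ρ' X Xᴴ ρ).PosSemidef) :
    ∃ Y : Matrix n n ℂ, opNorm Y ≤ 1 ∧ X = hρ'.sqrt * Y * hρ.sqrt := by
  refine ⟨cdiag hρ'.1 (fun x => (Real.sqrt x)⁻¹) * X * cdiag hρ.1 (fun x => (Real.sqrt x)⁻¹),
    ?_, ?_⟩
  · -- norm bound
    rw [opNorm_le_one_iff]
    intro v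
    set G1 := cdiag hρ'.1 (fun x => (Real.sqrt x)⁻¹) with hG1
    set G2 := cdiag hρ.1 (fun x => (Real.sqrt x)⁻¹) with hG2
    have key : ∀ u, Complex.normSq (star u ⬝ᵥ ((G1 * X * G2) *ᵥ v)) ≤ sqn u * sqn v := by
      intro u
      have eY : star u ⬝ᵥ ((G1 * X * G2) *ᵥ v) = star (G1 *ᵥ u) ⬝ᵥ (X *ᵥ (G2 *ᵥ v)) := by
        have hsh := shift G1 u (X *ᵥ (G2 *ᵥ v))
        rw [hG1, cdiag_herm, ← hG1] at hsh
        rw [hsh, mulVec_mulVec, mulVec_mulVec, Matrix.mul_assoc]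
      have hcs := cs_block h (G1 *ᵥ u) (G2 *ᵥ v)
      have b1 : (star (G1 *ᵥ u) ⬝ᵥ (ρ' *ᵥ (G1 *ᵥ u))).re ≤ sqn u := by
        rw [mulVec_mulVec, hG1, base_mul_ginv hρ']
        have hsh := shift (cdiag hρ'.1 fun x => (Real.sqrt x)⁻¹) u (cdiag hρ'.1 Real.sqrt *ᵥ u)
        rw [cdiag_herm] at hsh
        rw [hsh, mulVec_mulVec, fun_mul_sqrt_eq hρ']
        exact proj_le (cdiag_herm _ _) (proj_idem hρ') u
      have b2 : (star (G2 *ᵥ v) ⬝ᵥ (ρ *ᵥ (G2 *ᵥ v))).re ≤ sqn v := by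
        rw [mulVec_mulVec, hG2, base_mul_ginv hρ]
        have hsh := shift (cdiag hρ.1 fun x => (Real.sqrt x)⁻¹) v (cdiag hρ.1 Real.sqrt *ᵥ v)
        rw [cdiag_herm] at hsh
        rw [hsh, mulVec_mulVec, fun_mul_sqrt_eq hρ]
        exact proj_le (cdiag_herm _ _) (proj_idem hρ) v
      have n1 : 0 ≤ (star (G1 *ᵥ u) ⬝ᵥ (ρ' *ᵥ (G1 *ᵥ u))).re := by
        have := quad_re h (G1 *ᵥ u) 0
        simpa using this
      have n2 : 0 ≤ (star (G2 *ᵥ v) ⬝ᵥ (ρ *ᵥ (G2 *ᵥ v))).re := by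
        have := quad_re h 0 (G2 *ᵥ v)
        simpa using this
      calc Complex.normSq (star u ⬝ᵥ ((G1 * X * G2) *ᵥ v))
          ≤ (star (G1 *ᵥ u) ⬝ᵥ (ρ' *ᵥ (G1 *ᵥ u))).re * (star (G2 *ᵥ v) ⬝ᵥ (ρ *ᵥ (G2 *ᵥ v))).re := by
            rw [eY]; exact hcs
        _ ≤ sqn u * sqn v := mul_le_mul b1 b2 n2 (sqn_nonneg u)
    have hk := key ((G1 * X * G2) *ᵥ v)
    rw [dot_self_eq, Complex.normSq_ofReal] at hk
    rcases (sqn_nonneg ((G1 * X * G2) *ᵥ v)).eq_or_lt with h0 | h0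
    · rw [← h0]; exact sqn_nonneg v
    · exact (mul_le_mul_iff_right₀ h0).mp hk
  · -- the factorization
    have e1 : cdiag hρ'.1 (fun x => Real.sqrt x * (Real.sqrt x)⁻¹) * X = X :=
      proj_absorb_left h (cdiag_herm _ _) (base_absorb hρ')
    have e2 : X * cdiag hρ.1 (fun x => Real.sqrt x * (Real.sqrt x)⁻¹) = X :=
      proj_absorb_right h (base_absorb hρ)
    calc X = cdiag hρ'.1 (fun x => Real.sqrt x * (Real.sqrt x)⁻¹) * X
          * cdiag hρ.1 (fun x => Real.sqrt x * (Real.sqrt x)⁻¹) := by rw [e1, e2]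
      _ = (cdiag hρ'.1 Real.sqrt * cdiag hρ'.1 fun x => (Real.sqrt x)⁻¹) * X
          * (cdiag hρ.1 (fun x => (Real.sqrt x)⁻¹) * cdiag hρ.1 Real.sqrt) := by
            rw [sqrt_mul_fun_eq hρ', fun_mul_sqrt_eq hρ]
      _ = hρ'.sqrt * (cdiag hρ'.1 (fun x => (Real.sqrt x)⁻¹) * X
          * cdiag hρ.1 fun x => (Real.sqrt x)⁻¹) * hρ.sqrt := by
            rw [sqrt_eq_cdiag hρ', sqrt_eq_cdiag hρ]
            simp only [Matrix.mul_assoc]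

lemma backward (hρ' : ρ'.PosSemidef) (hρ : ρ.PosSemidef) (Y : Matrix n n ℂ)
    (hY : opNorm Y ≤ 1) (hX : X = hρ'.sqrt * Y * hρ.sqrt) :
    (Matrix.fromBlocks ρ' X Xᴴ ρ).PosSemidef := by
  have hYs := (opNorm_le_one_iff Y).mp hY
  rw [posSemidef_iff_dotProduct_mulVec]
  constructor
  · rw [isHermitian_fromBlocks_iff]
    exact ⟨hρ'.1, rfl, conjTranspose_conjTranspose X, hρ.1⟩
  · intro x
    have hx : x = Sum.elim (x ∘ Sum.inl) (x ∘ Sum.inr) := by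
      funext i; cases i <;> rfl
    rw [hx]
    set u := x ∘ Sum.inl
    set v := x ∘ Sum.inr
    rw [Function.star_sumElim, fromBlocks_mulVec, dotProduct_block]
    simp only [Sum.elim_comp_inl, Sum.elim_comp_inr, dotProduct_add]
    rw [conj_cross X u v]
    -- compute the four terms
    have hP : hρ'.sqrtᴴ = hρ'.sqrt := cdiag_herm _ _
    have hQ : hρ.sqrtᴴ = hρ.sqrt := cdiag_herm _ _
    have eA : star u ⬝ᵥ (ρ' *ᵥ u) = ((sqn (hρ'.sqrt *ᵥ u) : ℝ) : ℂ) := by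
      rw [← dot_self_eq]
      have hsh := shift hρ'.sqrt u (hρ'.sqrt *ᵥ u)
      rw [hP] at hsh
      rw [hsh, mulVec_mulVec, hρ'.sqrt_mul_self]
    have eB : star v ⬝ᵥ (ρ *ᵥ v) = ((sqn (hρ.sqrt *ᵥ v) : ℝ) : ℂ) := by
      rw [← dot_self_eq]
      have hsh := shift hρ.sqrt v (hρ.sqrt *ᵥ v)
      rw [hQ] at hsh
      rw [hsh, mulVec_mulVec, hρ.sqrt_mul_self]
    have eC : star u ⬝ᵥ (X *ᵥ v)
        = star (hρ'.sqrt *ᵥ u) ⬝ᵥ (Y *ᵥ (hρ.sqrt *ᵥ v)) := by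
      have hsh := shift hρ'.sqrt u (Y *ᵥ (hρ.sqrt *ᵥ v))
      rw [hP] at hsh
      rw [hX, hsh, mulVec_mulVec, mulVec_mulVec, Matrix.mul_assoc]
    rw [eA, eB, eC]
    set a := sqn (hρ'.sqrt *ᵥ u) with ha
    set b := sqn (hρ.sqrt *ᵥ v) with hb
    set c := star (hρ'.sqrt *ᵥ u) ⬝ᵥ (Y *ᵥ (hρ.sqrt *ᵥ v)) with hc
    have hna : 0 ≤ a := sqn_nonneg _
    have hnb : 0 ≤ b := sqn_nonneg _
    have hcs : Complex.normSq c ≤ a * b := by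
      calc Complex.normSq c ≤ sqn (hρ'.sqrt *ᵥ u) * sqn (Y *ᵥ (hρ.sqrt *ᵥ v)) := cs_dot _ _
        _ ≤ a * b := by
            rw [← ha]
            exact mul_le_mul_of_nonneg_left (hYs _) hna
    have hre : (c.re) ^ 2 ≤ a * b := by
      have := Complex.normSq_apply c
      nlinarith [sq_nonneg c.im]
    rw [Complex.le_def]
    constructor
    · simp only [Complex.add_re, Complex.ofReal_re, Complex.conj_re, Complex.zero_re]
      nlinarith [sq_nonneg (a - b), sq_nonneg (a + b + 2 * c.re), sq_nonneg (a + b - 2 * c.re)]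
    · simp only [Complex.add_im, Complex.ofReal_im, Complex.conj_im, Complex.zero_im]
      ring

end Stmt12Aux

theorem stmt12 (ρ' ρ X : Matrix n n ℂ) (hρ' : ρ'.PosSemidef) (hρ : ρ.PosSemidef) :
    (Matrix.fromBlocks ρ' X Xᴴ ρ).PosSemidef ↔
      ∃ Y : Matrix n n ℂ, opNorm Y ≤ 1 ∧ X = msqrt ρ' * Y * msqrt ρ := by
  have hm' : msqrt ρ' = hρ'.sqrt := dif_pos hρ'
  have hm : msqrt ρ = hρ.sqrt := dif_pos hρ
  rw [hm', hm]
  constructor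
  · exact Stmt12Aux.forward hρ' hρ
  · rintro ⟨Y, hY, hX⟩
    exact Stmt12Aux.backward hρ' hρ Y hY hX
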